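/- Let ω > 0 and let w_j^τ (j = 1,…,N−1, τ = ±) be the oscillatory waves w_j^τ(x,y) = e^{τiλ_j x}(e^{iκ_j y}, −ω⁻¹(τλ_j + iκ_j)e^{iκ_j y}, −ie^{−iκ_j y}, −iω⁻¹(τλ_j + iκ_j)e^{−iκ_j y}) with distinct κ_j ∈ π + (π/L)ℤ, |κ_j| < ω and λ_j = √(ω² − κ_j²) > 0. Then the symplectic form q satisfies q(w_j^τ, w_k^θ) = (4τiLλ_j/ω)·δ_{jk}δ_{τθ}. -/

import Mathlib

/-- The symplectic form `q(w, w̃)` evaluated at the cross-section `x = a`. -/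
noncomputable def qform (L a : ℝ) (u v u' v' tu tv tu' tv' : ℝ × ℝ → ℂ) : ℂ :=
  -Complex.I * ∫ y in (0 : ℝ)..L,
    ((starRingEnd ℂ) (tu (a, y)) * v (a, y) + (starRingEnd ℂ) (tv (a, y)) * u (a, y)
      - (starRingEnd ℂ) (tu' (a, y)) * v' (a, y) - (starRingEnd ℂ) (tv' (a, y)) * u' (a, y))

/-- Components of the oscillatory wave `w_j^τ` with transverse number `κj`,
longitudinal number `λj` and sign `τ = ±1`. -/
noncomputable def oscU (lamj κj τ : ℝ) : ℝ × ℝ → ℂ := fun p =>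
  Complex.exp (Complex.I * (τ * lamj) * p.1) * Complex.exp (Complex.I * κj * p.2)
noncomputable def oscV (ω lamj κj τ : ℝ) : ℝ × ℝ → ℂ := fun p =>
  Complex.exp (Complex.I * (τ * lamj) * p.1) *
    (-((ω : ℂ)⁻¹ * ((τ * lamj : ℝ) + Complex.I * κj)) * Complex.exp (Complex.I * κj * p.2))
noncomputable def oscU' (lamj κj τ : ℝ) : ℝ × ℝ → ℂ := fun p =>
  Complex.exp (Complex.I * (τ * lamj) * p.1) * (-Complex.I * Complex.exp (-(Complex.I * κj * p.2)))
noncomputable def oscV' (ω lamj κj τ : ℝ) : ℝ × ℝ → ℂ := fun p =>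
  Complex.exp (Complex.I * (τ * lamj) * p.1) *
    (-(Complex.I * (ω : ℂ)⁻¹ * ((τ * lamj : ℝ) + Complex.I * κj)) *
      Complex.exp (-(Complex.I * κj * p.2)))

/-!
At `x = 0` the integrand of `q(w_j^τ, w_k^θ)` collapses to
`-(2/ω) (τλ_j + θλ_k + i(κ_j - κ_k)) cos((κ_j - κ_k) y)`.
Since `(κ_j - κ_k) L ∈ πℤ`, the cosine integrates to `0` over `[0, L]` unless `j = k`, and for
`j = k` the prefactor `τ + θ` vanishes unless `τ = θ`.
-/

lemma integral_cos_mul_eq_zero_of_mul_eq_int_mul_pi {a L : ℝ} (n : ℤ) (ha : a ≠ 0)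
    (h : a * L = n * Real.pi) : ∫ y in (0 : ℝ)..L, Real.cos (a * y) = 0 := by
  rw [intervalIntegral.integral_comp_mul_left _ ha, integral_cos, h, mul_zero,
    Real.sin_int_mul_pi, Real.sin_zero, sub_zero, smul_zero]

section

open Complex

lemma conj_cexp_I_mul_ofReal (c y : ℝ) :
    (starRingEnd ℂ) (exp (I * c * y)) = exp (-(I * c * y)) := by
  rw [← exp_conj]; simp

lemma conj_cexp_neg_I_mul_ofReal (c y : ℝ) :
    (starRingEnd ℂ) (exp (-(I * c * y))) = exp (I * c * y) := by
  rw [← exp_conj]; simp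

lemma two_mul_cos_sub_mul_ofReal (c d y : ℝ) :
    2 * (Real.cos ((c - d) * y) : ℂ)
      = exp (I * c * y) * exp (-(I * d * y)) + exp (I * d * y) * exp (-(I * c * y)) := by
  rw [ofReal_cos, cos, ← exp_add, ← exp_add]
  push_cast
  ring_nf

lemma osc_integrand_eq (ω lamj lamk κj κk τ θ y : ℝ) :
    (starRingEnd ℂ) (oscU lamk κk θ (0, y)) * oscV ω lamj κj τ (0, y)
      + (starRingEnd ℂ) (oscV ω lamk κk θ (0, y)) * oscU lamj κj τ (0, y)
      - (starRingEnd ℂ) (oscU' lamk κk θ (0, y)) * oscV' ω lamj κj τ (0, y)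
      - (starRingEnd ℂ) (oscV' ω lamk κk θ (0, y)) * oscU' lamj κj τ (0, y)
    = -2 * (ω : ℂ)⁻¹ * ((τ * lamj + θ * lamk : ℝ) + I * (κj - κk))
        * (Real.cos ((κj - κk) * y) : ℂ) := by
  have hcos := two_mul_cos_sub_mul_ofReal κj κk y
  simp only [oscU, oscV, oscU', oscV', ofReal_zero, mul_zero, exp_zero, one_mul, map_mul,
    map_neg, map_add, map_inv₀, conj_I, conj_ofReal, conj_cexp_I_mul_ofReal,
    conj_cexp_neg_I_mul_ofReal]
  push_cast at hcos ⊢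
  linear_combination (ω : ℂ)⁻¹ * (τ * lamj + θ * lamk + I * (κj - κk))
    * (hcos + exp (I * κk * y) * exp (-(I * κj * y)) * I_sq)

lemma qform_osc_eq (L ω lamj lamk κj κk τ θ : ℝ) :
    qform L 0 (oscU lamj κj τ) (oscV ω lamj κj τ) (oscU' lamj κj τ) (oscV' ω lamj κj τ)
        (oscU lamk κk θ) (oscV ω lamk κk θ) (oscU' lamk κk θ) (oscV' ω lamk κk θ)
      = 2 * I / ω * ((τ * lamj + θ * lamk : ℝ) + I * (κj - κk))
          * ((∫ y in (0 : ℝ)..L, Real.cos ((κj - κk) * y) : ℝ) : ℂ) := by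
  simp only [qform, osc_integrand_eq]
  rw [intervalIntegral.integral_const_mul, intervalIntegral.integral_ofReal]
  ring

end

open Real in
theorem stmt9_general {ι : Type*} [DecidableEq ι] (L ω : ℝ) (hL : 0 < L)
    (κ : ι → ℝ) (m : ι → ℤ)
    (hκm : ∀ j, κ j = π + π * m j / L)
    (hinj : Function.Injective κ)
    (lam : ι → ℝ)
    (j k : ι) (τ θ : ℝ) (hτ : τ = 1 ∨ τ = -1) (hθ : θ = 1 ∨ θ = -1) :
    qform L 0 (oscU (lam j) (κ j) τ) (oscV ω (lam j) (κ j) τ)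
        (oscU' (lam j) (κ j) τ) (oscV' ω (lam j) (κ j) τ)
        (oscU (lam k) (κ k) θ) (oscV ω (lam k) (κ k) θ)
        (oscU' (lam k) (κ k) θ) (oscV' ω (lam k) (κ k) θ)
      = if j = k ∧ τ = θ then 4 * (τ : ℂ) * Complex.I * L * (lam j) / ω else 0 := by
  rw [qform_osc_eq]
  rcases eq_or_ne j k with rfl | hjk
  · simp only [sub_self, zero_mul, Real.cos_zero, intervalIntegral.integral_const, smul_eq_mul,
      mul_one, sub_zero, true_and]
    split_ifs with hτθ
    · subst hτθ
      push_cast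
      ring
    · have hθτ : θ = -τ := by grind
      subst hθτ
      push_cast
      ring
  · have hκ : (κ j - κ k) * L = ((m j - m k : ℤ) : ℝ) * π := by
      rw [hκm j, hκm k]
      field_simp
      push_cast
      ring
    rw [integral_cos_mul_eq_zero_of_mul_eq_int_mul_pi _ (sub_ne_zero.mpr (hinj.ne hjk)) hκ]
    simp [hjk]

open Real in
theorem stmt9 {ι : Type*} [DecidableEq ι] (L ω : ℝ) (hL : 0 < L) (hω : 0 < ω)
    (κ : ι → ℝ) (m : ι → ℤ)
    (hκm : ∀ j, κ j = π + π * m j / L)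
    (hinj : Function.Injective κ)
    (hbound : ∀ j, |κ j| < ω)
    (lam : ι → ℝ) (hlam : ∀ j, lam j = Real.sqrt (ω ^ 2 - κ j ^ 2))
    (j k : ι) (τ θ : ℝ) (hτ : τ = 1 ∨ τ = -1) (hθ : θ = 1 ∨ θ = -1) :
    qform L 0 (oscU (lam j) (κ j) τ) (oscV ω (lam j) (κ j) τ)
        (oscU' (lam j) (κ j) τ) (oscV' ω (lam j) (κ j) τ)
        (oscU (lam k) (κ k) θ) (oscV ω (lam k) (κ k) θ)
        (oscU' (lam k) (κ k) θ) (oscV' ω (lam k) (κ k) θ)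
      = if j = k ∧ τ = θ then 4 * (τ : ℂ) * Complex.I * L * (lam j) / ω else 0 :=
  stmt9_general L ω hL κ m hκm hinj lam j k τ θ hτ hθ
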